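/- Fix real numbers 0 < x₁ < x₃ < x₂ < x₄ and 0 < s₄ < s₁ < s₃ < s₂, and let G be the 4×4 matrix with entries G_{ij} = (x_i ∧ x_j)(s_i ∧ s_j). Then G is invertible and the (1,2) entry of G⁻¹ is strictly positive; in particular G⁻¹ is not an M-matrix. -/

import Mathlib

/-!
`G` is the Hadamard product of the Brownian-motion covariance matrices `min (x i) (x j)` and
`min (s i) (s j)`. A min-matrix of distinct positive times is positive definite (after sorting,
subtracting the smallest time splits off a positive rank-one term and leaves a smaller
min-matrix), so by the Schur product theorem `G` is positive definite and `det G > 0`.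
The entry `G⁻¹ 0 1` is `adj G 0 1 / det G`, and this cofactor is
`x 0 * x 2 * s 3 ^ 2 * (x 1 - x 2) * (s 2 - s 0) > 0`.
-/

def IsMMatrix (A : Matrix (Fin 4) (Fin 4) ℝ) : Prop :=
  (∀ i j, i ≠ j → A i j ≤ 0) ∧ IsUnit A.det ∧ ∀ i j, 0 ≤ A⁻¹ i j

open Matrix

def minMatrix {ι : Type*} (t : ι → ℝ) : Matrix ι ι ℝ := of fun i j ↦ min (t i) (t j)

lemma isHermitian_minMatrix {ι : Type*} (t : ι → ℝ) : (minMatrix t).IsHermitian := by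
  ext i j
  simp [minMatrix, min_comm]

lemma dotProduct_minMatrix_mulVec_fin_succ {n : ℕ} (t v : Fin (n + 1) → ℝ)
    (ht : ∀ i, t 0 ≤ t i) :
    v ⬝ᵥ minMatrix t *ᵥ v = t 0 * (∑ i, v i) ^ 2 +
      Fin.tail v ⬝ᵥ minMatrix (fun i ↦ t i.succ - t 0) *ᵥ Fin.tail v := by
  have hmin (i j) : min (t i) (t j) = t 0 + min (t i - t 0) (t j - t 0) := by
    rw [min_sub_sub_right]; ring
  rw [sq, Finset.sum_mul_sum]
  simp only [dotProduct, mulVec, minMatrix, of_apply, hmin, Fin.sum_univ_succ, sub_self, Fin.tail,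
    Finset.mul_sum, mul_add, add_mul, Finset.sum_add_distrib, min_eq_left (sub_nonneg.2 (ht _)),
    min_eq_right (sub_nonneg.2 (ht _)), mul_zero, zero_mul, Finset.sum_const_zero]
  ring_nf

theorem posDef_minMatrix_of_strictMono {n : ℕ} {t : Fin n → ℝ} (ht : StrictMono t)
    (hpos : ∀ i, 0 < t i) : (minMatrix t).PosDef := by
  induction n with
  | zero => exact ⟨isHermitian_minMatrix t, fun v hv ↦ absurd (Subsingleton.elim v 0) hv⟩
  | succ n ih =>
    rw [posDef_iff_dotProduct_mulVec]
    refine ⟨isHermitian_minMatrix t, fun v hv ↦ ?_⟩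
    rw [star_trivial, dotProduct_minMatrix_mulVec_fin_succ t v fun i ↦ ht.monotone (Fin.zero_le i)]
    by_cases htail : Fin.tail v = 0
    · have hv0 : v 0 ≠ 0 := fun h ↦ hv (funext fun i ↦ Fin.cases h (congrFun htail) i)
      have hsum : ∑ i, v i = v 0 := by
        simp [Fin.sum_univ_succ, ← Fin.tail_def, htail]
      rw [hsum, htail, zero_dotProduct, add_zero]
      exact mul_pos (hpos 0) (by positivity)
    · have hshift : (minMatrix fun i : Fin n ↦ t i.succ - t 0).PosDef :=
        ih (fun i j hij ↦ sub_lt_sub_right (ht (Fin.succ_lt_succ_iff.2 hij)) _)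
          fun i ↦ sub_pos.2 (ht i.succ_pos)
      have htail_pos := (posDef_iff_dotProduct_mulVec.1 hshift).2 htail
      rw [star_trivial] at htail_pos
      have hrank_one := mul_nonneg (hpos 0).le (sq_nonneg (∑ i, v i))
      linarith

theorem posDef_minMatrix {ι : Type*} [Fintype ι] {t : ι → ℝ} (ht : Function.Injective t)
    (hpos : ∀ i, 0 < t i) : (minMatrix t).PosDef := by
  let e := (Fintype.equivFin ι).symm
  let σ : Fin (Fintype.card ι) ≃ ι := (Tuple.sort (t ∘ e)).trans e
  have hsorted : StrictMono (t ∘ σ) :=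
    (Tuple.monotone_sort (t ∘ e)).strictMono_of_injective (ht.comp σ.injective)
  convert (posDef_minMatrix_of_strictMono hsorted fun i ↦ hpos _).submatrix σ.symm.injective
  ext i j
  simp [minMatrix]

lemma adjugate_hadamard_minMatrix_zero_one {x s : Fin 4 → ℝ}
    (hx₁ : x 0 ≤ x 2) (hx₂ : x 2 ≤ x 1) (hx₃ : x 1 ≤ x 3)
    (hs₁ : s 3 ≤ s 0) (hs₂ : s 0 ≤ s 2) (hs₃ : s 2 ≤ s 1) :
    (minMatrix x ⊙ minMatrix s).adjugate 0 1 = x 0 * x 2 * s 3 ^ 2 * (x 1 - x 2) * (s 2 - s 0) := by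
  rw [adjugate_fin_succ_eq_det_submatrix, det_fin_three]
  simp [minMatrix, Fin.succAbove, hx₁, hx₂, hx₃, hs₁, hs₂, hs₃, hx₁.trans hx₂, hx₂.trans hx₃,
    hx₁.trans (hx₂.trans hx₃), hs₁.trans hs₂, hs₂.trans hs₃, hs₁.trans (hs₂.trans hs₃)]
  ring

/-- The covariance matrix of the Brownian sheet at four points
`(xᵢ, sᵢ)` with `0 < x₁ < x₃ < x₂ < x₄` and `0 < s₄ < s₁ < s₃ < s₂`
is invertible, the `(1,2)` entry of its inverse is strictly positive,
and hence its inverse is not an `M`-matrix. -/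
theorem brownian_sheet_not_mMatrix (x s : Fin 4 → ℝ)
    (hx0 : 0 < x 0) (hx1 : x 0 < x 2) (hx2 : x 2 < x 1) (hx3 : x 1 < x 3)
    (hs0 : 0 < s 3) (hs1 : s 3 < s 0) (hs2 : s 0 < s 2) (hs3 : s 2 < s 1)
    (G : Matrix (Fin 4) (Fin 4) ℝ)
    (hG : ∀ i j, G i j = min (x i) (x j) * min (s i) (s j)) :
    IsUnit G.det ∧ 0 < G⁻¹ 0 1 ∧ ¬ IsMMatrix G⁻¹ := by
  have hGmin : G = minMatrix x ⊙ minMatrix s := by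
    ext i j
    simp [hG, minMatrix]
  have hx : Function.Injective x := by
    intro i j h
    fin_cases i <;> fin_cases j <;> first | rfl | (simp at h; linarith)
  have hs : Function.Injective s := by
    intro i j h
    fin_cases i <;> fin_cases j <;> first | rfl | (simp at h; linarith)
  have hdet : 0 < G.det := by
    rw [hGmin]
    exact ((posDef_minMatrix hx fun i ↦ by fin_cases i <;> simp <;> linarith).hadamard
      (posDef_minMatrix hs fun i ↦ by fin_cases i <;> simp <;> linarith)).det_pos
  have hadj : 0 < G.adjugate 0 1 := by
    rw [hGmin, adjugate_hadamard_minMatrix_zero_one hx1.le hx2.le hx3.le hs1.le hs2.le hs3.le]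
    have hx2_pos : 0 < x 2 := hx0.trans hx1
    exact mul_pos (mul_pos (mul_pos (mul_pos hx0 hx2_pos) (pow_pos hs0 2)) (sub_pos.2 hx2))
      (sub_pos.2 hs2)
  have hinv : 0 < G⁻¹ 0 1 := by
    rw [inv_def, Matrix.smul_apply, smul_eq_mul, Ring.inverse_eq_inv']
    exact mul_pos (inv_pos.2 hdet) hadj
  exact ⟨hdet.ne'.isUnit, hinv, fun hM ↦ (hM.1 0 1 (by decide)).not_gt hinv⟩
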